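/- Let D, k, q, R₀ be positive real numbers and let d satisfy 0 < d ≤ R₀. Then ∫₀^∞ q · ( (1/2)·( erf((R₀+d)/(2·√(D·t))) + erf((R₀−d)/(2·√(D·t))) ) + (√(D·t)/(d·√π)) · ( exp(−(R₀+d)²/(4·D·t)) − exp(−(R₀−d)²/(4·D·t)) ) ) · exp(−k·t) dt = (q/(2·k²)) · ( 2·k − exp(−√(k/D)·(R₀+d)) · (exp(2·d·√(k/D)) − 1) · (√(D·k) + k·R₀) / d ). -/

import Mathlib

/-!
With `a = (R₀ ± d) / (2√D)` and `√(Dt) = √D √t`, the integrand is a linear combination of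
`erf (a/√t) e^{-kt}` and `√t e^{-a²/t} e^{-kt}`, whose integrals over `(0, ∞)` are
`(1 - e^{-2a√k}) / k` and `√π (1/(2√k) + a) e^{-2a√k} / k`. Both follow from the fundamental
theorem of calculus with explicit primitives built from `e^{±2a√k} erfc (a/√t ± √k √t)`. The
integrands are nonnegative, so integrability comes for free once the primitives have limits at
`0⁺` and at `∞`.
-/

open MeasureTheory Real Set

/-- The Gauss error function `erf x = (2/√π) ∫₀ˣ exp(−u²) du`. -/
noncomputable def erf (x : ℝ) : ℝ :=
  (2 / Real.sqrt π) * ∫ u in (0 : ℝ)..x, Real.exp (-u ^ 2)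

open Filter Topology

theorem hasDerivAt_erf (x : ℝ) : HasDerivAt erf (2 / √π * exp (-x ^ 2)) x := by
  have hc : Continuous fun u : ℝ => exp (-u ^ 2) := by fun_prop
  exact (intervalIntegral.integral_hasDerivAt_right (hc.intervalIntegrable 0 x)
    (hc.stronglyMeasurableAtFilter volume (𝓝 x)) hc.continuousAt).const_mul (2 / √π)

theorem continuous_erf : Continuous erf :=
  continuous_iff_continuousAt.2 fun x => (hasDerivAt_erf x).continuousAt

@[simp]
theorem erf_zero : erf 0 = 0 := by simp [erf]

theorem erf_neg (x : ℝ) : erf (-x) = -erf x := by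
  have h : ∫ u in (0 : ℝ)..(-x), exp (-u ^ 2) = -∫ u in (0 : ℝ)..x, exp (-u ^ 2) :=
    calc ∫ u in (0 : ℝ)..(-x), exp (-u ^ 2) = ∫ u in (0 : ℝ)..(-x), exp (-(-u) ^ 2) := by simp
      _ = ∫ u in x..0, exp (-u ^ 2) := by
        rw [intervalIntegral.integral_comp_neg fun u : ℝ => exp (-u ^ 2)]; simp
      _ = -∫ u in (0 : ℝ)..x, exp (-u ^ 2) := intervalIntegral.integral_symm _ _
  rw [erf, erf, h, mul_neg]

theorem erf_nonneg {x : ℝ} (hx : 0 ≤ x) : 0 ≤ erf x :=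
  mul_nonneg (by positivity) (intervalIntegral.integral_nonneg hx fun _ _ => (exp_pos _).le)

theorem tendsto_erf_atTop : Tendsto erf atTop (𝓝 1) := by
  have hint : IntegrableOn (fun u : ℝ => exp (-u ^ 2)) (Ioi 0) := by
    simpa using (integrableOn_Ioi_exp_neg_mul_sq_iff (b := 1)).2 one_pos
  have hval : ∫ u in Ioi (0 : ℝ), exp (-u ^ 2) = √π / 2 := by
    simpa using integral_gaussian_Ioi 1
  have h := (intervalIntegral_tendsto_integral_Ioi 0 hint tendsto_id).const_mul (2 / √π)
  have hone : 2 / √π * (√π / 2) = 1 := by field_simp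
  rwa [hval, hone] at h

theorem tendsto_erf_atBot : Tendsto erf atBot (𝓝 (-1)) := by
  have h := (tendsto_erf_atTop.comp tendsto_neg_atBot_atTop).neg
  refine h.congr fun x => ?_
  simp [erf_neg]

noncomputable def erfc (x : ℝ) : ℝ := 1 - erf x

theorem hasDerivAt_erfc (x : ℝ) : HasDerivAt erfc (-(2 / √π * exp (-x ^ 2))) x :=
  (hasDerivAt_erf x).const_sub 1

theorem continuous_erfc : Continuous erfc := continuous_const.sub continuous_erf

@[simp]
theorem erfc_zero : erfc 0 = 1 := by simp [erfc]

theorem tendsto_erfc_atTop : Tendsto erfc atTop (𝓝 0) := by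
  have h := tendsto_erf_atTop.const_sub 1
  rwa [sub_self] at h

theorem tendsto_erfc_atBot : Tendsto erfc atBot (𝓝 2) := by
  have h := tendsto_erf_atBot.const_sub 1
  rwa [sub_neg_eq_add, one_add_one_eq_two] at h

section ImproperIntegral

/- The primitives used below take junk values at the endpoint `0` (where `a / √0 = 0`), so the
endpoint value is replaced by the one-sided limit before invoking Mathlib's versions. -/

variable {g g' : ℝ → ℝ} {a l m : ℝ}

theorem hasDerivAt_update_of_ne {x : ℝ} (hx : x ≠ a) (hg : HasDerivAt g (g' x) x) :
    HasDerivAt (Function.update g a l) (g' x) x :=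
  hg.congr_of_eventuallyEq <| (eventually_ne_nhds hx).mono fun _ hy => Function.update_of_ne hy _ _

theorem tendsto_update_atTop (hm : Tendsto g atTop (𝓝 m)) :
    Tendsto (Function.update g a l) atTop (𝓝 m) :=
  hm.congr' <| (eventually_ne_atTop a).mono fun _ hy => (Function.update_of_ne hy _ _).symm

theorem continuousWithinAt_update_Ici (hl : Tendsto g (𝓝[>] a) (𝓝 l)) :
    ContinuousWithinAt (Function.update g a l) (Ici a) a :=
  continuousWithinAt_update_same.2 (by rwa [Ici_sdiff_left])

theorem integrableOn_Ioi_deriv_of_nonneg_of_tendsto_nhdsGT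
    (hderiv : ∀ x ∈ Ioi a, HasDerivAt g (g' x) x) (hg' : ∀ x ∈ Ioi a, 0 ≤ g' x)
    (hl : Tendsto g (𝓝[>] a) (𝓝 l)) (hm : Tendsto g atTop (𝓝 m)) : IntegrableOn g' (Ioi a) :=
  integrableOn_Ioi_deriv_of_nonneg (continuousWithinAt_update_Ici hl)
    (fun x hx => hasDerivAt_update_of_ne (ne_of_gt hx) (hderiv x hx)) hg' (tendsto_update_atTop hm)

theorem integral_Ioi_of_hasDerivAt_of_nonneg_of_tendsto_nhdsGT
    (hderiv : ∀ x ∈ Ioi a, HasDerivAt g (g' x) x) (hg' : ∀ x ∈ Ioi a, 0 ≤ g' x)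
    (hl : Tendsto g (𝓝[>] a) (𝓝 l)) (hm : Tendsto g atTop (𝓝 m)) : ∫ x in Ioi a, g' x = m - l := by
  simpa using integral_Ioi_of_hasDerivAt_of_nonneg (continuousWithinAt_update_Ici hl)
    (fun x hx => hasDerivAt_update_of_ne (ne_of_gt hx) (hderiv x hx)) hg' (tendsto_update_atTop hm)

end ImproperIntegral

theorem tendsto_div_sqrt_nhdsGT_zero {a : ℝ} (ha : 0 < a) :
    Tendsto (fun t => a / √t) (𝓝[>] 0) atTop := by
  have hsqrt : Tendsto (√·) (𝓝[>] 0) (𝓝[>] 0) :=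
    tendsto_nhdsWithin_iff.2 ⟨(continuous_sqrt.tendsto' 0 0 sqrt_zero).mono_left nhdsWithin_le_nhds,
      eventually_nhdsWithin_of_forall fun _ ht => sqrt_pos.2 ht⟩
  simpa [div_eq_mul_inv] using (tendsto_inv_nhdsGT_zero.comp hsqrt).const_mul_atTop ha

theorem tendsto_mul_sqrt_nhdsGT_zero (b : ℝ) : Tendsto (fun t => b * √t) (𝓝[>] 0) (𝓝 0) :=
  ((continuous_const.mul continuous_sqrt).tendsto' 0 0 (by simp)).mono_left nhdsWithin_le_nhds

theorem hasDerivAt_div_sqrt (a : ℝ) {t : ℝ} (ht : 0 < t) :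
    HasDerivAt (fun t => a / √t) (-(a / (2 * t * √t))) t := by
  have hst : √t ≠ 0 := (sqrt_pos.2 ht).ne'
  refine ((hasDerivAt_const t a).div (hasDerivAt_sqrt ht.ne') hst).congr_deriv ?_
  field_simp
  rw [sq_sqrt ht.le]
  ring

/-- The factor `exp (2ab)` cancels the cross term of `(a/√t + b√t)²`, so the `t`-derivative is a
pure Gaussian factor. -/
noncomputable def shiftedErfc (a b t : ℝ) : ℝ := exp (2 * a * b) * erfc (a / √t + b * √t)

section ShiftedErfc

variable (a b : ℝ)

theorem hasDerivAt_shiftedErfc {t : ℝ} (ht : 0 < t) :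
    HasDerivAt (shiftedErfc a b)
      ((a / t - b) / (√π * √t) * exp (-a ^ 2 / t) * exp (-b ^ 2 * t)) t := by
  have hst : √t ≠ 0 := (sqrt_pos.2 ht).ne'
  have hsq : √t ^ 2 = t := sq_sqrt ht.le
  have harg : HasDerivAt (fun t => a / √t + b * √t) ((b - a / t) / (2 * √t)) t := by
    refine ((hasDerivAt_div_sqrt a ht).add ((hasDerivAt_sqrt ht.ne').const_mul b)).congr_deriv ?_
    field_simp
    ring
  have hexp : exp (2 * a * b) * exp (-(a / √t + b * √t) ^ 2)
      = exp (-a ^ 2 / t) * exp (-b ^ 2 * t) := by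
    rw [← exp_add, ← exp_add]
    congr 1
    field_simp
    rw [hsq]
    ring
  refine (((hasDerivAt_erfc _).comp t harg).const_mul (exp (2 * a * b))).congr_deriv ?_
  rw [mul_assoc _ (exp _), ← hexp]
  field_simp
  ring

theorem tendsto_shiftedErfc_atTop_of_pos {b : ℝ} (hb : 0 < b) :
    Tendsto (shiftedErfc a b) atTop (𝓝 0) := by
  have harg : Tendsto (fun t => a / √t + b * √t) atTop atTop :=
    (tendsto_const_nhds.div_atTop tendsto_sqrt_atTop).add_atTop
      (tendsto_sqrt_atTop.const_mul_atTop hb)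
  unfold shiftedErfc
  simpa using (tendsto_erfc_atTop.comp harg).const_mul (exp (2 * a * b))

theorem tendsto_shiftedErfc_atTop_of_neg {b : ℝ} (hb : b < 0) :
    Tendsto (shiftedErfc a b) atTop (𝓝 (2 * exp (2 * a * b))) := by
  have harg : Tendsto (fun t => a / √t + b * √t) atTop atBot :=
    (tendsto_const_nhds.div_atTop tendsto_sqrt_atTop).add_atBot
      (tendsto_sqrt_atTop.const_mul_atTop_of_neg hb)
  rw [mul_comm]
  exact (tendsto_erfc_atBot.comp harg).const_mul (exp (2 * a * b))

theorem tendsto_shiftedErfc_nhdsGT_zero_of_pos {a : ℝ} (ha : 0 < a) :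
    Tendsto (shiftedErfc a b) (𝓝[>] 0) (𝓝 0) := by
  have harg := (tendsto_div_sqrt_nhdsGT_zero ha).atTop_add (tendsto_mul_sqrt_nhdsGT_zero b)
  unfold shiftedErfc
  simpa using (tendsto_erfc_atTop.comp harg).const_mul (exp (2 * a * b))

theorem tendsto_shiftedErfc_zero_nhdsGT_zero : Tendsto (shiftedErfc 0 b) (𝓝[>] 0) (𝓝 1) := by
  unfold shiftedErfc
  simpa [Function.comp_def] using (continuous_erfc.tendsto 0).comp (tendsto_mul_sqrt_nhdsGT_zero b)

end ShiftedErfc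

theorem tendsto_exp_neg_mul_atTop {k : ℝ} (hk : 0 < k) :
    Tendsto (fun t => exp (-k * t)) atTop (𝓝 0) :=
  tendsto_exp_atBot.comp (tendsto_id.const_mul_atTop_of_neg (neg_lt_zero.2 hk))

theorem tendsto_exp_neg_mul_nhdsGT_zero (k : ℝ) : Tendsto (fun t => exp (-k * t)) (𝓝[>] 0) (𝓝 1) :=
  ((continuous_const.mul continuous_id).rexp.tendsto' 0 1 (by simp)).mono_left nhdsWithin_le_nhds

noncomputable def erfLaplacePrimitive (k a t : ℝ) : ℝ :=
  -(erf (a / √t) * exp (-k * t) + (shiftedErfc a √k t + shiftedErfc a (-√k) t) / 2) / k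

noncomputable def gaussLaplacePrimitive (k a t : ℝ) : ℝ :=
  (√π / (4 * √k) * (shiftedErfc a (-√k) t - shiftedErfc a √k t)
    + a * √π / 2 * (shiftedErfc a √k t + shiftedErfc a (-√k) t)
    - √t * exp (-a ^ 2 / t) * exp (-k * t)) / k

section LaplacePrimitive

variable {k : ℝ} (a : ℝ)

theorem hasDerivAt_shiftedErfc_sqrt (hk : 0 < k) {t : ℝ} (ht : 0 < t) :
    HasDerivAt (shiftedErfc a √k)
      ((a / t - √k) / (√π * √t) * exp (-a ^ 2 / t) * exp (-k * t)) t := by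
  simpa [sq_sqrt hk.le] using hasDerivAt_shiftedErfc a √k ht

theorem hasDerivAt_shiftedErfc_neg_sqrt (hk : 0 < k) {t : ℝ} (ht : 0 < t) :
    HasDerivAt (shiftedErfc a (-√k))
      ((a / t + √k) / (√π * √t) * exp (-a ^ 2 / t) * exp (-k * t)) t := by
  simpa [sq_sqrt hk.le] using hasDerivAt_shiftedErfc a (-√k) ht

theorem hasDerivAt_erfLaplacePrimitive (hk : 0 < k) {t : ℝ} (ht : 0 < t) :
    HasDerivAt (erfLaplacePrimitive k a) (erf (a / √t) * exp (-k * t)) t := by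
  have hst : √t ≠ 0 := (sqrt_pos.2 ht).ne'
  have hexp : exp (-(a / √t) ^ 2) = exp (-a ^ 2 / t) := by
    rw [div_pow, sq_sqrt ht.le, neg_div]
  have hE := ((hasDerivAt_erf _).comp t (hasDerivAt_div_sqrt a ht)).mul
    ((hasDerivAt_id' t).const_mul (-k)).exp
  refine (((hE.add (((hasDerivAt_shiftedErfc_sqrt a hk ht).add
    (hasDerivAt_shiftedErfc_neg_sqrt a hk ht)).div_const 2)).neg).div_const k).congr_deriv ?_
  rw [Function.comp_apply, hexp]
  field_simp
  ring

theorem hasDerivAt_gaussLaplacePrimitive (hk : 0 < k) {t : ℝ} (ht : 0 < t) :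
    HasDerivAt (gaussLaplacePrimitive k a) (√t * exp (-a ^ 2 / t) * exp (-k * t)) t := by
  have hst : √t ≠ 0 := (sqrt_pos.2 ht).ne'
  have hsk : √k ≠ 0 := (sqrt_pos.2 hk).ne'
  have hS := ((hasDerivAt_sqrt ht.ne').mul
    ((hasDerivAt_const t (-a ^ 2)).div (hasDerivAt_id' t) ht.ne').exp).mul
    ((hasDerivAt_id' t).const_mul (-k)).exp
  have hP := hasDerivAt_shiftedErfc_sqrt a hk ht
  have hM := hasDerivAt_shiftedErfc_neg_sqrt a hk ht
  refine (((((hM.sub hP).const_mul (√π / (4 * √k))).add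
    ((hP.add hM).const_mul (a * √π / 2))).sub hS).div_const k).congr_deriv ?_
  simp only [Pi.mul_apply, Pi.div_apply]
  field_simp
  rw [sq_sqrt ht.le]
  ring

theorem tendsto_erfLaplacePrimitive_atTop (hk : 0 < k) :
    Tendsto (erfLaplacePrimitive k a) atTop (𝓝 (-exp (-(2 * a * √k)) / k)) := by
  have hE : Tendsto (fun t => erf (a / √t)) atTop (𝓝 0) := by
    simpa [Function.comp_def] using
      (continuous_erf.tendsto 0).comp (tendsto_const_nhds.div_atTop tendsto_sqrt_atTop)
  have hsk := sqrt_pos.2 hk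
  have h := ((hE.mul (tendsto_exp_neg_mul_atTop hk)).add
    (((tendsto_shiftedErfc_atTop_of_pos a hsk).add
      (tendsto_shiftedErfc_atTop_of_neg a (neg_neg_of_pos hsk))).div_const 2)).neg.div_const k
  unfold erfLaplacePrimitive
  convert h using 2
  ring_nf

theorem tendsto_gaussLaplacePrimitive_atTop (hk : 0 < k) :
    Tendsto (gaussLaplacePrimitive k a) atTop
      (𝓝 (√π * (1 / (2 * √k) + a) * exp (-(2 * a * √k)) / k)) := by
  have hS : Tendsto (fun t => √t * exp (-a ^ 2 / t) * exp (-k * t)) atTop (𝓝 0) := by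
    have hgauss : Tendsto (fun t => exp (-a ^ 2 / t)) atTop (𝓝 1) := by
      simpa [Function.comp_def] using
        (continuous_exp.tendsto 0).comp (tendsto_const_nhds.div_atTop tendsto_id)
    have hsqrt : Tendsto (fun t => √t * exp (-k * t)) atTop (𝓝 0) := by
      simpa [sqrt_eq_rpow] using tendsto_rpow_mul_exp_neg_mul_atTop_nhds_zero (1 / 2) k hk
    simpa [mul_right_comm] using hsqrt.mul hgauss
  have hsk := sqrt_pos.2 hk
  have hP := tendsto_shiftedErfc_atTop_of_pos a hsk
  have hM := tendsto_shiftedErfc_atTop_of_neg a (neg_neg_of_pos hsk)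
  have h := ((((hM.sub hP).const_mul (√π / (4 * √k))).add
    ((hP.add hM).const_mul (a * √π / 2))).sub hS).div_const k
  unfold gaussLaplacePrimitive
  convert h using 2
  field_simp
  ring_nf

theorem tendsto_sqrt_mul_exp_mul_exp_nhdsGT_zero (hk : 0 < k) :
    Tendsto (fun t => √t * exp (-a ^ 2 / t) * exp (-k * t)) (𝓝[>] 0) (𝓝 0) := by
  refine squeeze_zero' (Eventually.of_forall fun t => by positivity) ?_
    ((continuous_sqrt.tendsto' 0 0 sqrt_zero).mono_left nhdsWithin_le_nhds)
  filter_upwards [self_mem_nhdsWithin] with t (ht : 0 < t)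
  have hgauss : exp (-a ^ 2 / t) ≤ 1 :=
    exp_le_one_iff.2 (div_nonpos_of_nonpos_of_nonneg (by nlinarith) ht.le)
  have hdecay : exp (-k * t) ≤ 1 := exp_le_one_iff.2 (by nlinarith)
  calc √t * exp (-a ^ 2 / t) * exp (-k * t) ≤ √t * 1 * 1 := by gcongr
    _ = √t := by ring

theorem tendsto_erfLaplacePrimitive_nhdsGT_zero (ha : 0 ≤ a) :
    Tendsto (erfLaplacePrimitive k a) (𝓝[>] 0) (𝓝 (-1 / k)) := by
  unfold erfLaplacePrimitive
  rcases ha.eq_or_lt with rfl | ha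
  · have h := (((tendsto_shiftedErfc_zero_nhdsGT_zero √k).add
      (tendsto_shiftedErfc_zero_nhdsGT_zero (-√k))).div_const 2).neg.div_const k
    simp only [zero_div, erf_zero, zero_mul, zero_add]
    convert h using 2
    norm_num
  · have hE : Tendsto (fun t => erf (a / √t)) (𝓝[>] 0) (𝓝 1) :=
      tendsto_erf_atTop.comp (tendsto_div_sqrt_nhdsGT_zero ha)
    have h := ((hE.mul (tendsto_exp_neg_mul_nhdsGT_zero k)).add
      (((tendsto_shiftedErfc_nhdsGT_zero_of_pos √k ha).add
        (tendsto_shiftedErfc_nhdsGT_zero_of_pos (-√k) ha)).div_const 2)).neg.div_const k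
    convert h using 2
    norm_num

theorem tendsto_gaussLaplacePrimitive_nhdsGT_zero (hk : 0 < k) (ha : 0 ≤ a) :
    Tendsto (gaussLaplacePrimitive k a) (𝓝[>] 0) (𝓝 0) := by
  unfold gaussLaplacePrimitive
  have hS := tendsto_sqrt_mul_exp_mul_exp_nhdsGT_zero a hk
  rcases ha.eq_or_lt with rfl | ha
  · have hP := tendsto_shiftedErfc_zero_nhdsGT_zero √k
    have hM := tendsto_shiftedErfc_zero_nhdsGT_zero (-√k)
    have h := ((((hM.sub hP).const_mul (√π / (4 * √k))).add
      ((hP.add hM).const_mul (0 * √π / 2))).sub hS).div_const k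
    convert h using 2
    norm_num
  · have hP := tendsto_shiftedErfc_nhdsGT_zero_of_pos √k ha
    have hM := tendsto_shiftedErfc_nhdsGT_zero_of_pos (-√k) ha
    have h := ((((hM.sub hP).const_mul (√π / (4 * √k))).add
      ((hP.add hM).const_mul (a * √π / 2))).sub hS).div_const k
    convert h using 2
    norm_num

end LaplacePrimitive

section LaplaceTransform

variable {k a : ℝ}

theorem integrableOn_erf_div_sqrt_mul_exp_neg_mul (hk : 0 < k) (ha : 0 ≤ a) :
    IntegrableOn (fun t => erf (a / √t) * exp (-k * t)) (Ioi 0) :=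
  integrableOn_Ioi_deriv_of_nonneg_of_tendsto_nhdsGT
    (fun _ ht => hasDerivAt_erfLaplacePrimitive a hk ht)
    (fun t _ => mul_nonneg (erf_nonneg (by positivity)) (exp_pos _).le)
    (tendsto_erfLaplacePrimitive_nhdsGT_zero a ha) (tendsto_erfLaplacePrimitive_atTop a hk)

theorem integral_erf_div_sqrt_mul_exp_neg_mul (hk : 0 < k) (ha : 0 ≤ a) :
    ∫ t in Ioi 0, erf (a / √t) * exp (-k * t) = (1 - exp (-(2 * a * √k))) / k := by
  rw [integral_Ioi_of_hasDerivAt_of_nonneg_of_tendsto_nhdsGT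
    (fun _ ht => hasDerivAt_erfLaplacePrimitive a hk ht)
    (fun t _ => mul_nonneg (erf_nonneg (by positivity)) (exp_pos _).le)
    (tendsto_erfLaplacePrimitive_nhdsGT_zero a ha) (tendsto_erfLaplacePrimitive_atTop a hk)]
  ring

theorem integrableOn_sqrt_mul_exp_neg_sq_div_mul_exp_neg_mul (hk : 0 < k) (ha : 0 ≤ a) :
    IntegrableOn (fun t => √t * exp (-a ^ 2 / t) * exp (-k * t)) (Ioi 0) :=
  integrableOn_Ioi_deriv_of_nonneg_of_tendsto_nhdsGT
    (fun _ ht => hasDerivAt_gaussLaplacePrimitive a hk ht) (fun _ _ => by positivity)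
    (tendsto_gaussLaplacePrimitive_nhdsGT_zero a hk ha) (tendsto_gaussLaplacePrimitive_atTop a hk)

theorem integral_sqrt_mul_exp_neg_sq_div_mul_exp_neg_mul (hk : 0 < k) (ha : 0 ≤ a) :
    ∫ t in Ioi 0, √t * exp (-a ^ 2 / t) * exp (-k * t)
      = √π * (1 / (2 * √k) + a) * exp (-(2 * a * √k)) / k := by
  rw [integral_Ioi_of_hasDerivAt_of_nonneg_of_tendsto_nhdsGT
    (fun _ ht => hasDerivAt_gaussLaplacePrimitive a hk ht) (fun _ _ => by positivity)
    (tendsto_gaussLaplacePrimitive_nhdsGT_zero a hk ha) (tendsto_gaussLaplacePrimitive_atTop a hk),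
    sub_zero]

end LaplaceTransform

theorem div_two_sqrt_mul {D : ℝ} (hD : 0 ≤ D) (c t : ℝ) :
    c / (2 * √(D * t)) = c / (2 * √D) / √t := by
  rw [sqrt_mul hD, div_div, mul_assoc]

theorem neg_sq_div_four_mul {D : ℝ} (hD : 0 < D) (c t : ℝ) :
    -c ^ 2 / (4 * D * t) = -(c / (2 * √D)) ^ 2 / t := by
  rw [div_pow, mul_pow, sq_sqrt hD.le]
  ring

theorem channel_response_algebra {D k q R₀ d : ℝ} (hD : 0 < D) (hk : 0 < k) (hd : 0 < d) :
    q / 2 * ((1 - exp (-(2 * ((R₀ + d) / (2 * √D)) * √k))) / k)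
      + q / 2 * ((1 - exp (-(2 * ((R₀ - d) / (2 * √D)) * √k))) / k)
      + q * √D / (d * √π) * (√π * (1 / (2 * √k) + (R₀ + d) / (2 * √D))
          * exp (-(2 * ((R₀ + d) / (2 * √D)) * √k)) / k)
      - q * √D / (d * √π) * (√π * (1 / (2 * √k) + (R₀ - d) / (2 * √D))
          * exp (-(2 * ((R₀ - d) / (2 * √D)) * √k)) / k)
    = q / (2 * k ^ 2) * (2 * k - exp (-√(k / D) * (R₀ + d)) * (exp (2 * d * √(k / D)) - 1)
        * (√(D * k) + k * R₀) / d) := by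
  have hsk := sqrt_pos.2 hk
  have hfar : exp (-(2 * ((R₀ + d) / (2 * √D)) * √k)) = exp (-√(k / D) * (R₀ + d)) := by
    rw [sqrt_div' _ hD.le]; congr 1; field_simp
  have hnear : exp (-(2 * ((R₀ - d) / (2 * √D)) * √k))
      = exp (-√(k / D) * (R₀ + d)) * exp (2 * d * √(k / D)) := by
    rw [← exp_add, sqrt_div' _ hD.le]; congr 1; field_simp; ring
  rw [hfar, hnear, sqrt_mul hD.le]
  generalize exp (-√(k / D) * (R₀ + d)) = E
  generalize exp (2 * d * √(k / D)) = X
  obtain ⟨r, hr, rfl⟩ : ∃ r, 0 < r ∧ k = r ^ 2 := ⟨√k, hsk, (sq_sqrt hk.le).symm⟩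
  rw [sqrt_sq hr.le]
  field_simp
  ring

theorem passive_rx_exact_channel_response_general (D k q R₀ d : ℝ)
    (hD : 0 < D) (hk : 0 < k)
    (hd : 0 < d) (hdR : d ≤ R₀) :
    ∫ t in Ioi (0 : ℝ),
        q * ((1 / 2) * (erf ((R₀ + d) / (2 * Real.sqrt (D * t)))
                        + erf ((R₀ - d) / (2 * Real.sqrt (D * t))))
              + Real.sqrt (D * t) / (d * Real.sqrt π) *
                  (Real.exp (-(R₀ + d) ^ 2 / (4 * D * t))
                    - Real.exp (-(R₀ - d) ^ 2 / (4 * D * t))))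
          * Real.exp (-k * t)
      = q / (2 * k ^ 2) *
          (2 * k - Real.exp (-Real.sqrt (k / D) * (R₀ + d)) *
            (Real.exp (2 * d * Real.sqrt (k / D)) - 1) *
              (Real.sqrt (D * k) + k * R₀) / d) := by
  have hA : 0 ≤ (R₀ + d) / (2 * √D) := div_nonneg (by linarith) (by positivity)
  have hB : 0 ≤ (R₀ - d) / (2 * √D) := div_nonneg (by linarith) (by positivity)
  have hfA := (integrableOn_erf_div_sqrt_mul_exp_neg_mul hk hA).const_mul (q / 2)
  have hfB := (integrableOn_erf_div_sqrt_mul_exp_neg_mul hk hB).const_mul (q / 2)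
  have hgA := (integrableOn_sqrt_mul_exp_neg_sq_div_mul_exp_neg_mul hk hA).const_mul
    (q * √D / (d * √π))
  have hgB := (integrableOn_sqrt_mul_exp_neg_sq_div_mul_exp_neg_mul hk hB).const_mul
    (q * √D / (d * √π))
  rw [← channel_response_algebra hD hk hd, ← integral_erf_div_sqrt_mul_exp_neg_mul hk hA,
    ← integral_erf_div_sqrt_mul_exp_neg_mul hk hB,
    ← integral_sqrt_mul_exp_neg_sq_div_mul_exp_neg_mul hk hA,
    ← integral_sqrt_mul_exp_neg_sq_div_mul_exp_neg_mul hk hB,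
    ← integral_const_mul, ← integral_const_mul, ← integral_const_mul, ← integral_const_mul,
    ← integral_add, ← integral_add, ← integral_sub]
  · refine setIntegral_congr_fun measurableSet_Ioi fun t _ => ?_
    rw [div_two_sqrt_mul hD.le, div_two_sqrt_mul hD.le, neg_sq_div_four_mul hD,
      neg_sq_div_four_mul hD, sqrt_mul hD.le]
    ring
  exacts [(hfA.add hfB).add hgA, hgB, hfA.add hfB, hgA, hfA, hfB]

/-- Equations (B.2)–(B.3) of the paper: exact asymptotic channel response at a
passive spherical receiver of radius `R₀` at distance `0 < d ≤ R₀` from a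
continuously emitting point transmitter. -/
theorem passive_rx_exact_channel_response (D k q R₀ d : ℝ)
    (hD : 0 < D) (hk : 0 < k) (hq : 0 < q) (hR₀ : 0 < R₀)
    (hd : 0 < d) (hdR : d ≤ R₀) :
    ∫ t in Ioi (0 : ℝ),
        q * ((1 / 2) * (erf ((R₀ + d) / (2 * Real.sqrt (D * t)))
                        + erf ((R₀ - d) / (2 * Real.sqrt (D * t))))
              + Real.sqrt (D * t) / (d * Real.sqrt π) *
                  (Real.exp (-(R₀ + d) ^ 2 / (4 * D * t))
                    - Real.exp (-(R₀ - d) ^ 2 / (4 * D * t))))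
          * Real.exp (-k * t)
      = q / (2 * k ^ 2) *
          (2 * k - Real.exp (-Real.sqrt (k / D) * (R₀ + d)) *
            (Real.exp (2 * d * Real.sqrt (k / D)) - 1) *
              (Real.sqrt (D * k) + k * R₀) / d) :=
  passive_rx_exact_channel_response_general D k q R₀ d hD hk hd hdR
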